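/- Let A, B be m×n real matrices with rank(B) = k, and let Â be a best rank-k approximation of A in Frobenius norm (e.g., from the SVD truncation). Then ‖Â − B‖_F² ≤ 5k·‖A − B‖₂², where ‖·‖₂ is the spectral norm. -/

import Mathlib

/-- Euclidean norm of a vector. -/
noncomputable def enorm {n : ℕ} (v : Fin n → ℝ) : ℝ := Real.sqrt (∑ i, v i ^ 2)

/-- Spectral (operator) norm of a matrix. -/
noncomputable def specNorm {m n : ℕ} (M : Matrix (Fin m) (Fin n) ℝ) : ℝ :=
  sSup ((fun x : Fin n → ℝ => _root_.enorm (M.mulVec x)) '' {x | _root_.enorm x = 1})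

/-!
Let `E = A - Â`, and let `U` and `K` be the column and row spaces of `Â`. Optimality of `Â`
forces `Â = P_U A = A P_K`, so `E` kills `K`, `Â` kills `Kᗮ`, and `E` takes values in `Uᗮ`.

If `rank Â < k`, adding a rank-one piece of `E` to `Â` shows `Â = A`. Otherwise, for unit vectors
`u ∈ K` and `v ∈ Kᗮ`, replacing `Â` by `Â - (Âu)uᵀ + (Ev)vᵀ` keeps the rank at most `k` and
changes the error by `‖Âu‖² - ‖Ev‖²`, so `‖Ev‖ ≤ ‖Âu‖`. Hence `A` stretches every vector of the
`(k+1)`-dimensional space `K ⊕ ℝv` by at least `‖Ev‖`; as `B` has rank `k` it kills a vector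
there, so `‖Ev‖ ≤ ‖A - B‖₂`. This gives `‖A - Â‖₂ ≤ ‖A - B‖₂`.

Finally `Â - B = P_U (A - B) - P_Uᗮ B` is a sum of two Frobenius-orthogonal matrices of rank at
most `k`, with spectral norms at most `‖A - B‖₂` and `‖P_Uᗮ (A - B)‖₂ + ‖A - Â‖₂ ≤ 2 ‖A - B‖₂`.
Since `‖M‖_F² ≤ rank M · ‖M‖₂²`, the total is at most `(k + 4k) ‖A - B‖₂²`.
-/

open Matrix WithLp Module
open scoped RealInnerProductSpace Matrix.Norms.L2Operator

section Homogeneity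

variable {E F : Type*} [NormedAddCommGroup E] [NormedSpace ℝ E] [NormedAddCommGroup F]
  [NormedSpace ℝ F] (f : E →ₗ[ℝ] F) {S : Submodule ℝ E} {c : ℝ} {v : E}

lemma LinearMap.norm_apply_le_of_forall_norm_eq_one (h : ∀ w ∈ S, ‖w‖ = 1 → ‖f w‖ ≤ c)
    (hv : v ∈ S) : ‖f v‖ ≤ c * ‖v‖ := by
  rcases eq_or_ne v 0 with rfl | hv0
  · simp
  have hpos : 0 < ‖v‖ := norm_pos_iff.2 hv0
  have := h (‖v‖⁻¹ • v) (S.smul_mem _ hv) (by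
    rw [norm_smul, norm_inv, norm_norm, inv_mul_cancel₀ hpos.ne'])
  rw [map_smul, norm_smul, norm_inv, norm_norm, inv_mul_le_iff₀ hpos] at this
  linarith

lemma LinearMap.le_norm_apply_of_forall_norm_eq_one (h : ∀ w ∈ S, ‖w‖ = 1 → c ≤ ‖f w‖)
    (hv : v ∈ S) : c * ‖v‖ ≤ ‖f v‖ := by
  rcases eq_or_ne v 0 with rfl | hv0
  · simp
  have hpos : 0 < ‖v‖ := norm_pos_iff.2 hv0
  have := h (‖v‖⁻¹ • v) (S.smul_mem _ hv) (by
    rw [norm_smul, norm_inv, norm_norm, inv_mul_cancel₀ hpos.ne'])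
  rw [map_smul, norm_smul, norm_inv, norm_norm, le_inv_mul_iff₀ hpos] at this
  linarith

end Homogeneity

namespace Matrix

variable {m n : Type*}

lemma toEuclideanLin_vecMulVec [Fintype n] [DecidableEq n] (a : EuclideanSpace ℝ m)
    (b y : EuclideanSpace ℝ n) : toEuclideanLin (vecMulVec a b) y = ⟪b, y⟫ • a := by
  ext i
  simp [toLpLin_apply, vecMulVec_mulVec, EuclideanSpace.inner_eq_star_dotProduct, dotProduct_comm]

variable [Fintype m] [Fintype n]

def frobeniusInner (M N : Matrix m n ℝ) : ℝ := ∑ i, ∑ j, M i j * N i j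

lemma frobeniusInner_self_sub_eq_sum_sq (M N : Matrix m n ℝ) :
    frobeniusInner (M - N) (M - N) = ∑ i, ∑ j, (M i j - N i j) ^ 2 := by
  simp only [frobeniusInner, Matrix.sub_apply, sq]

lemma frobeniusInner_comm (M N : Matrix m n ℝ) : frobeniusInner M N = frobeniusInner N M := by
  simp only [frobeniusInner, mul_comm]

lemma frobeniusInner_add_left (M N R : Matrix m n ℝ) :
    frobeniusInner (M + N) R = frobeniusInner M R + frobeniusInner N R := by
  simp only [frobeniusInner, add_apply, add_mul, Finset.sum_add_distrib]

lemma frobeniusInner_add_right (M N R : Matrix m n ℝ) :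
    frobeniusInner M (N + R) = frobeniusInner M N + frobeniusInner M R := by
  rw [frobeniusInner_comm, frobeniusInner_add_left, frobeniusInner_comm N, frobeniusInner_comm R]

lemma frobeniusInner_zero_right (M : Matrix m n ℝ) : frobeniusInner M 0 = 0 := by
  simp [frobeniusInner]

lemma frobeniusInner_self_add (M N : Matrix m n ℝ) :
    frobeniusInner (M + N) (M + N) =
      frobeniusInner M M + 2 * frobeniusInner M N + frobeniusInner N N := by
  rw [frobeniusInner_add_left, frobeniusInner_add_right, frobeniusInner_add_right,
    frobeniusInner_comm N M]
  ring

lemma frobeniusInner_self_nonneg (M : Matrix m n ℝ) : 0 ≤ frobeniusInner M M :=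
  Finset.sum_nonneg fun _ _ => Finset.sum_nonneg fun _ _ => mul_self_nonneg _

lemma frobeniusInner_self_eq_zero {M : Matrix m n ℝ} : frobeniusInner M M = 0 ↔ M = 0 := by
  refine ⟨fun h => ?_, fun h => by simp [h, frobeniusInner]⟩
  ext i j
  have hi := (Finset.sum_eq_zero_iff_of_nonneg fun i _ =>
    Finset.sum_nonneg fun j _ => mul_self_nonneg (M i j)).1 h i (Finset.mem_univ _)
  exact mul_self_eq_zero.1 <| (Finset.sum_eq_zero_iff_of_nonneg fun j _ =>
    mul_self_nonneg (M i j)).1 hi j (Finset.mem_univ _)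

lemma frobeniusInner_transpose (M N : Matrix m n ℝ) :
    frobeniusInner Mᵀ Nᵀ = frobeniusInner M N :=
  Finset.sum_comm

lemma frobeniusInner_eq_trace (M N : Matrix m n ℝ) : frobeniusInner M N = trace (Mᵀ * N) := by
  simp only [frobeniusInner, trace, diag_apply, mul_apply, transpose_apply]
  exact Finset.sum_comm

lemma frobeniusInner_mul_left {l : Type*} [Fintype l] (P : Matrix m l ℝ) (X : Matrix l n ℝ)
    (Y : Matrix m n ℝ) : frobeniusInner (P * X) Y = frobeniusInner X (Pᵀ * Y) := by
  rw [frobeniusInner_eq_trace, frobeniusInner_eq_trace, transpose_mul, Matrix.mul_assoc]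

lemma frobeniusInner_self_vecMulVec (a : EuclideanSpace ℝ m) (b : EuclideanSpace ℝ n) :
    frobeniusInner (vecMulVec a b) (vecMulVec a b) = ‖a‖ ^ 2 * ‖b‖ ^ 2 := by
  simp only [frobeniusInner, vecMulVec_apply, EuclideanSpace.real_norm_sq_eq, Finset.sum_mul_sum]
  exact Finset.sum_congr rfl fun i _ => Finset.sum_congr rfl fun j _ => by ring

variable [DecidableEq n]

lemma frobeniusInner_vecMulVec_right (M : Matrix m n ℝ) (a : EuclideanSpace ℝ m)
    (b : EuclideanSpace ℝ n) : frobeniusInner M (vecMulVec a b) = ⟪a, toEuclideanLin M b⟫ := by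
  simp only [frobeniusInner, vecMulVec_apply, EuclideanSpace.inner_eq_star_dotProduct,
    toLpLin_apply, dotProduct, mulVec, Finset.sum_mul, star_trivial]
  exact Finset.sum_congr rfl fun i _ => Finset.sum_congr rfl fun j _ => by ring

lemma frobeniusInner_self_add_vecMulVec (M : Matrix m n ℝ) (a : EuclideanSpace ℝ m)
    {u : EuclideanSpace ℝ n} (hu : toEuclideanLin M u = 0) :
    frobeniusInner (M + vecMulVec a u) (M + vecMulVec a u) =
      frobeniusInner M M + ‖a‖ ^ 2 * ‖u‖ ^ 2 := by
  rw [frobeniusInner_self_add, frobeniusInner_vecMulVec_right, hu, inner_zero_right,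
    frobeniusInner_self_vecMulVec]
  ring

lemma frobeniusInner_self_sub_vecMulVec (M : Matrix m n ℝ) {v : EuclideanSpace ℝ n}
    (hv : ‖v‖ = 1) :
    frobeniusInner (M - vecMulVec (toEuclideanLin M v) v) (M - vecMulVec (toEuclideanLin M v) v) =
      frobeniusInner M M - ‖toEuclideanLin M v‖ ^ 2 := by
  rw [show (vecMulVec (toEuclideanLin M v) v : Matrix m n ℝ) =
      -vecMulVec (-toEuclideanLin M v) v by simp [neg_vecMulVec],
    sub_neg_eq_add, frobeniusInner_self_add, frobeniusInner_vecMulVec_right, inner_neg_left,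
    real_inner_self_eq_norm_sq, frobeniusInner_self_vecMulVec, norm_neg, hv]
  ring

lemma rank_eq_finrank_range_toEuclideanLin (M : Matrix m n ℝ) :
    M.rank = finrank ℝ (LinearMap.range (toEuclideanLin M)) :=
  M.rank_eq_finrank_range_toLin (EuclideanSpace.basisFun m ℝ).toBasis
    (EuclideanSpace.basisFun n ℝ).toBasis

lemma rank_le_finrank_of_range_le {M : Matrix m n ℝ} {W : Submodule ℝ (EuclideanSpace ℝ m)}
    (h : LinearMap.range (toEuclideanLin M) ≤ W) : M.rank ≤ finrank ℝ W :=
  M.rank_eq_finrank_range_toEuclideanLin ▸ Submodule.finrank_mono h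

lemma rank_add_le (M N : Matrix m n ℝ) : (M + N).rank ≤ M.rank + N.rank := by
  rw [rank_eq_finrank_range_toEuclideanLin, rank_eq_finrank_range_toEuclideanLin,
    rank_eq_finrank_range_toEuclideanLin, map_add]
  exact (Submodule.finrank_mono (LinearMap.range_add_le _ _)).trans
    (Submodule.finrank_add_le_finrank_add_finrank _ _)

lemma norm_toEuclideanLin_le (M : Matrix m n ℝ) (x : EuclideanSpace ℝ n) :
    ‖toEuclideanLin M x‖ ≤ ‖M‖ * ‖x‖ :=
  M.l2_opNorm_mulVec x

lemma l2_opNorm_le_of_bound {M : Matrix m n ℝ} {c : ℝ} (hc : 0 ≤ c)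
    (h : ∀ x, ‖toEuclideanLin M x‖ ≤ c * ‖x‖) : ‖M‖ ≤ c := by
  rw [l2_opNorm_def]
  exact ContinuousLinearMap.opNorm_le_bound _ hc h

lemma le_l2_opNorm_sub_of_rank_lt_finrank {A B : Matrix m n ℝ}
    {V : Submodule ℝ (EuclideanSpace ℝ n)} (hV : B.rank < finrank ℝ V) {s : ℝ}
    (hs : ∀ y ∈ V, s * ‖y‖ ≤ ‖toEuclideanLin A y‖) : s ≤ ‖A - B‖ := by
  set f := (toEuclideanLin B).domRestrict V
  have hrange : finrank ℝ (LinearMap.range f) ≤ B.rank :=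
    B.rank_eq_finrank_range_toEuclideanLin ▸
      Submodule.finrank_mono (LinearMap.range_domRestrict_le_range _ _)
  have hker : LinearMap.ker f ≠ ⊥ := by
    rw [← Submodule.one_le_finrank_iff]
    have := f.finrank_range_add_finrank_ker
    omega
  obtain ⟨⟨y, hyV⟩, hyker, hy0⟩ := Submodule.exists_mem_ne_zero_of_ne_bot hker
  have hBy : toEuclideanLin B y = 0 := LinearMap.mem_ker.1 hyker
  have hypos : 0 < ‖y‖ := norm_pos_iff.2 fun h => hy0 (Subtype.ext h)
  refine le_of_mul_le_mul_right ((hs y hyV).trans ?_) hypos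
  simpa [hBy] using (A - B).norm_toEuclideanLin_le y

variable [DecidableEq m]

lemma inner_toEuclideanLin_transpose (M : Matrix m n ℝ) (x : EuclideanSpace ℝ n)
    (y : EuclideanSpace ℝ m) : ⟪toEuclideanLin Mᵀ y, x⟫ = ⟪y, toEuclideanLin M x⟫ := by
  rw [← conjTranspose_eq_transpose_of_trivial, toEuclideanLin_conjTranspose_eq_adjoint,
    LinearMap.adjoint_inner_left]

lemma rank_sub_vecMulVec_lt (M : Matrix m n ℝ) {u : EuclideanSpace ℝ n}
    (hu : u ∈ LinearMap.range (toEuclideanLin Mᵀ)) (hu1 : ‖u‖ = 1) :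
    (M - vecMulVec (toEuclideanLin M u) u).rank < M.rank := by
  set K := LinearMap.range (toEuclideanLin Mᵀ)
  have hrange : LinearMap.range (toEuclideanLin (M - vecMulVec (toEuclideanLin M u) u)ᵀ) ≤
      K ⊓ (ℝ ∙ u)ᗮ := by
    rintro _ ⟨y, rfl⟩
    have hval : toEuclideanLin (M - vecMulVec (toEuclideanLin M u) u)ᵀ y =
        toEuclideanLin Mᵀ y - ⟪u, toEuclideanLin Mᵀ y⟫ • u := by
      rw [transpose_sub, transpose_vecMulVec, map_sub, LinearMap.sub_apply,
        toEuclideanLin_vecMulVec, real_inner_comm, ← inner_toEuclideanLin_transpose,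
        real_inner_comm]
    rw [hval]
    refine ⟨K.sub_mem (LinearMap.mem_range_self _ y) (K.smul_mem _ hu), ?_⟩
    rw [SetLike.mem_coe, Submodule.mem_orthogonal_singleton_iff_inner_right, inner_sub_right,
      real_inner_smul_right, real_inner_self_eq_norm_sq, hu1]
    ring
  have hlt : K ⊓ (ℝ ∙ u)ᗮ < K := by
    refine lt_of_le_of_ne inf_le_left fun h => ?_
    have : u ∈ (ℝ ∙ u)ᗮ := (h.symm ▸ hu : u ∈ K ⊓ (ℝ ∙ u)ᗮ).2
    rw [Submodule.mem_orthogonal_singleton_iff_inner_right, real_inner_self_eq_norm_sq,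
      hu1] at this
    norm_num at this
  rw [← rank_transpose, ← rank_transpose M, rank_eq_finrank_range_toEuclideanLin Mᵀ]
  exact (rank_le_finrank_of_range_le hrange).trans_lt (Submodule.finrank_lt_finrank_of_lt hlt)

lemma frobeniusInner_self_le_rank_mul_sq (M : Matrix m n ℝ) :
    frobeniusInner M M ≤ M.rank * ‖M‖ ^ 2 := by
  set K := LinearMap.range (toEuclideanLin Mᵀ)
  have hK : finrank ℝ K = M.rank := by
    rw [← rank_transpose, rank_eq_finrank_range_toEuclideanLin]
  let b := stdOrthonormalBasis ℝ K
  have hrow (i : m) : toLp 2 (M i) ∈ K := ⟨EuclideanSpace.single i 1, by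
    ext j; simp [toLpLin_apply, EuclideanSpace.single]⟩
  have hcoef (x : EuclideanSpace ℝ n) (i : m) : ⟪x, toLp 2 (M i)⟫ = toEuclideanLin M x i := by
    simp [EuclideanSpace.inner_eq_star_dotProduct, toLpLin_apply, mulVec]
  calc frobeniusInner M M = ∑ i, ‖toLp 2 (M i)‖ ^ 2 := by
        simp_rw [EuclideanSpace.real_norm_sq_eq, sq]; rfl
    _ = ∑ i, ∑ α, ⟪(b α : EuclideanSpace ℝ n), toLp 2 (M i)⟫ ^ 2 :=
        Finset.sum_congr rfl fun i _ => (b.sum_sq_inner_right ⟨_, hrow i⟩).symm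
    _ = ∑ α, ‖toEuclideanLin M (b α)‖ ^ 2 := by
        rw [Finset.sum_comm]
        simp only [hcoef, EuclideanSpace.real_norm_sq_eq]
    _ ≤ ∑ _α : Fin (finrank ℝ K), ‖M‖ ^ 2 := by
        refine Finset.sum_le_sum fun α _ => pow_le_pow_left₀ (norm_nonneg _) ?_ 2
        exact (M.norm_toEuclideanLin_le _).trans_eq
          (by rw [← Submodule.coe_norm, b.norm_eq_one, mul_one])
    _ = M.rank * ‖M‖ ^ 2 := by simp [hK]

lemma frobeniusInner_self_le_of_rank_le {M : Matrix m n ℝ} {k : ℕ} {s : ℝ} (hk : M.rank ≤ k)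
    (hs : ‖M‖ ≤ s) : frobeniusInner M M ≤ k * s ^ 2 :=
  M.frobeniusInner_self_le_rank_mul_sq.trans <| mul_le_mul (by exact_mod_cast hk)
    (pow_le_pow_left₀ (norm_nonneg _) hs 2) (by positivity) (Nat.cast_nonneg _)

end Matrix

namespace Submodule

variable {m : Type*} [Fintype m] [DecidableEq m] (U : Submodule ℝ (EuclideanSpace ℝ m))

noncomputable def projMatrix : Matrix m m ℝ :=
  toEuclideanLin.symm U.starProjection

@[simp] lemma toEuclideanLin_projMatrix :
    toEuclideanLin U.projMatrix = U.starProjection.toLinearMap :=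
  LinearEquiv.apply_symm_apply _ _

lemma projMatrix_transpose : U.projMatrixᵀ = U.projMatrix := by
  apply toEuclideanLin.injective
  rw [← conjTranspose_eq_transpose_of_trivial, toEuclideanLin_conjTranspose_eq_adjoint,
    toEuclideanLin_projMatrix]
  exact (LinearMap.isSymmetric_iff_isSelfAdjoint _).1 U.starProjection_isSymmetric

lemma projMatrix_add_projMatrix_orthogonal : U.projMatrix + Uᗮ.projMatrix = 1 := by
  apply toEuclideanLin.injective
  ext x : 1
  simp

lemma projMatrix_mul_projMatrix_orthogonal : U.projMatrix * Uᗮ.projMatrix = 0 := by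
  apply toEuclideanLin.injective
  ext x : 1
  simpa using (U.starProjection_apply_eq_zero_iff).2 (Uᗮ.starProjection_apply_mem x)

lemma l2_opNorm_projMatrix_le : ‖U.projMatrix‖ ≤ 1 := by
  rw [l2_opNorm_def, LinearEquiv.trans_apply, toEuclideanLin_projMatrix]
  exact U.starProjection_norm_le

lemma rank_projMatrix : U.projMatrix.rank = finrank ℝ U := by
  rw [rank_eq_finrank_range_toEuclideanLin, toEuclideanLin_projMatrix]
  exact congrArg (fun W : Submodule ℝ _ => finrank ℝ W) U.range_starProjection

variable {n : Type*} [Fintype n]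

lemma frobeniusInner_projMatrix_mul_projMatrix_orthogonal_mul (X Y : Matrix m n ℝ) :
    frobeniusInner (U.projMatrix * X) (Uᗮ.projMatrix * Y) = 0 := by
  rw [frobeniusInner_mul_left, ← Matrix.mul_assoc, projMatrix_transpose,
    projMatrix_mul_projMatrix_orthogonal, Matrix.zero_mul, frobeniusInner_zero_right]

lemma frobeniusInner_self_projMatrix_mul_add (X Y : Matrix m n ℝ) :
    frobeniusInner (U.projMatrix * X + Uᗮ.projMatrix * Y) (U.projMatrix * X + Uᗮ.projMatrix * Y) =
      frobeniusInner (U.projMatrix * X) (U.projMatrix * X) +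
        frobeniusInner (Uᗮ.projMatrix * Y) (Uᗮ.projMatrix * Y) := by
  rw [frobeniusInner_self_add, frobeniusInner_projMatrix_mul_projMatrix_orthogonal_mul]
  ring

variable [DecidableEq n]

lemma projMatrix_mul_of_range_le {X : Matrix m n ℝ}
    (h : LinearMap.range (toEuclideanLin X) ≤ U) : U.projMatrix * X = X := by
  apply toEuclideanLin.injective
  ext x : 1
  simp [starProjection_eq_self_iff.2 (h ⟨x, rfl⟩)]

lemma l2_opNorm_projMatrix_mul_le (X : Matrix m n ℝ) : ‖U.projMatrix * X‖ ≤ ‖X‖ :=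
  (l2_opNorm_mul _ _).trans (mul_le_of_le_one_left (norm_nonneg _) U.l2_opNorm_projMatrix_le)

end Submodule

namespace Matrix

variable {m n : Type*} [Fintype m] [Fintype n]

structure IsBestRankApprox (k : ℕ) (A Ahat : Matrix m n ℝ) : Prop where
  rank_le : Ahat.rank ≤ k
  frobeniusInner_le : ∀ C : Matrix m n ℝ, C.rank ≤ k →
    frobeniusInner (A - Ahat) (A - Ahat) ≤ frobeniusInner (A - C) (A - C)

namespace IsBestRankApprox

variable {k : ℕ} {A Ahat : Matrix m n ℝ}

lemma transpose (h : IsBestRankApprox k A Ahat) : IsBestRankApprox k Aᵀ Ahatᵀ where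
  rank_le := (rank_transpose Ahat).trans_le h.rank_le
  frobeniusInner_le C hC := by
    have := h.frobeniusInner_le Cᵀ ((rank_transpose C).trans_le hC)
    rwa [← frobeniusInner_transpose (A - Cᵀ), transpose_sub, transpose_transpose,
      ← frobeniusInner_transpose (A - Ahat), transpose_sub] at this

variable [DecidableEq n]

lemma eq_of_rank_lt (h : IsBestRankApprox k A Ahat) (hk : Ahat.rank < k) : Ahat = A := by
  have hunit : ∀ v ∈ (⊤ : Submodule ℝ (EuclideanSpace ℝ n)), ‖v‖ = 1 →
      ‖toEuclideanLin (A - Ahat) v‖ ≤ 0 := by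
    intro v _ hv
    set w := toEuclideanLin (A - Ahat) v
    have hrank : (Ahat + vecMulVec w v).rank ≤ k :=
      (rank_add_le _ _).trans (by have := rank_vecMulVec_le (w : m → ℝ) v; omega)
    have hopt := h.frobeniusInner_le _ hrank
    rw [sub_add_eq_sub_sub, frobeniusInner_self_sub_vecMulVec _ hv] at hopt
    nlinarith [norm_nonneg w]
  have hE : toEuclideanLin (A - Ahat) = 0 := LinearMap.ext fun x => norm_le_zero_iff.1 <| by
    simpa using (toEuclideanLin (A - Ahat)).norm_apply_le_of_forall_norm_eq_one hunit
      Submodule.mem_top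
  exact (sub_eq_zero.1 (toEuclideanLin.map_eq_zero_iff.1 hE)).symm

variable [DecidableEq m]

lemma projMatrix_mul_eq (h : IsBestRankApprox k A Ahat) :
    (LinearMap.range (toEuclideanLin Ahat)).projMatrix * A = Ahat := by
  set U := LinearMap.range (toEuclideanLin Ahat)
  have hPA : U.projMatrix * Ahat = Ahat := U.projMatrix_mul_of_range_le le_rfl
  have hQ : Uᗮ.projMatrix = 1 - U.projMatrix :=
    eq_sub_of_add_eq' U.projMatrix_add_projMatrix_orthogonal
  have hrank : (U.projMatrix * A).rank ≤ k := (rank_mul_le_left _ _).trans <| by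
    rw [U.rank_projMatrix, ← rank_eq_finrank_range_toEuclideanLin]
    exact h.rank_le
  have hopt := h.frobeniusInner_le _ hrank
  rw [show A - Ahat = U.projMatrix * (A - Ahat) + Uᗮ.projMatrix * A by
      rw [hQ, Matrix.mul_sub, hPA, Matrix.sub_mul, Matrix.one_mul]; abel,
    show A - U.projMatrix * A = Uᗮ.projMatrix * A by
      rw [hQ, Matrix.sub_mul, Matrix.one_mul],
    U.frobeniusInner_self_projMatrix_mul_add] at hopt
  have : U.projMatrix * (A - Ahat) = 0 :=
    frobeniusInner_self_eq_zero.1 (le_antisymm (by linarith) (frobeniusInner_self_nonneg _))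
  rwa [Matrix.mul_sub, hPA, sub_eq_zero] at this

lemma projMatrix_orthogonal_mul_eq (h : IsBestRankApprox k A Ahat) :
    (LinearMap.range (toEuclideanLin Ahat))ᗮ.projMatrix * A = A - Ahat := by
  set U := LinearMap.range (toEuclideanLin Ahat)
  have hPA : U.projMatrix * A = Ahat := h.projMatrix_mul_eq
  rw [← hPA, eq_sub_iff_add_eq', ← Matrix.add_mul, U.projMatrix_add_projMatrix_orthogonal,
    Matrix.one_mul]

lemma mul_projMatrix_eq (h : IsBestRankApprox k A Ahat) :
    A * (LinearMap.range (toEuclideanLin Ahatᵀ)).projMatrix = Ahat := by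
  simpa [Submodule.projMatrix_transpose] using
    congrArg Matrix.transpose h.transpose.projMatrix_mul_eq

lemma toEuclideanLin_sub_eq_zero_of_mem (h : IsBestRankApprox k A Ahat)
    {u : EuclideanSpace ℝ n} (hu : u ∈ LinearMap.range (toEuclideanLin Ahatᵀ)) :
    toEuclideanLin (A - Ahat) u = 0 := by
  conv_lhs => rw [← h.mul_projMatrix_eq]
  simp [Submodule.starProjection_eq_self_iff.2 hu]

lemma toEuclideanLin_eq_zero_of_mem_orthogonal (h : IsBestRankApprox k A Ahat)
    {v : EuclideanSpace ℝ n} (hv : v ∈ (LinearMap.range (toEuclideanLin Ahatᵀ))ᗮ) :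
    toEuclideanLin Ahat v = 0 := by
  rw [← h.mul_projMatrix_eq]
  simp [(Submodule.starProjection_apply_eq_zero_iff _).2 hv]

lemma norm_toEuclideanLin_sub_le (h : IsBestRankApprox k A Ahat)
    {u v : EuclideanSpace ℝ n} (hu : u ∈ LinearMap.range (toEuclideanLin Ahatᵀ)) (hu1 : ‖u‖ = 1)
    (hv : v ∈ (LinearMap.range (toEuclideanLin Ahatᵀ))ᗮ) (hv1 : ‖v‖ = 1) :
    ‖toEuclideanLin (A - Ahat) v‖ ≤ ‖toEuclideanLin Ahat u‖ := by
  set a := toEuclideanLin Ahat u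
  set w := toEuclideanLin (A - Ahat) v
  have hE'v : toEuclideanLin (A - Ahat + vecMulVec a u) v = w := by
    rw [map_add, LinearMap.add_apply, toEuclideanLin_vecMulVec,
      Submodule.inner_right_of_mem_orthogonal hu hv, zero_smul, add_zero]
  have hrank : (Ahat - vecMulVec a u + vecMulVec w v).rank ≤ k :=
    (rank_add_le _ _).trans <| by
      have h1 : (Ahat - vecMulVec a u).rank < Ahat.rank := rank_sub_vecMulVec_lt Ahat hu hu1
      have h2 := rank_vecMulVec_le (w : m → ℝ) v
      have h3 := h.rank_le
      omega
  have hopt := h.frobeniusInner_le _ hrank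
  rw [show A - (Ahat - vecMulVec a u + vecMulVec w v) =
      A - Ahat + vecMulVec a u - vecMulVec (toEuclideanLin (A - Ahat + vecMulVec a u) v) v by
      rw [hE'v]; abel,
    frobeniusInner_self_sub_vecMulVec _ hv1, hE'v,
    frobeniusInner_self_add_vecMulVec _ _ (h.toEuclideanLin_sub_eq_zero_of_mem hu), hu1] at hopt
  exact (pow_le_pow_iff_left₀ (norm_nonneg _) (norm_nonneg _) two_ne_zero).1 (by linarith)

lemma mul_norm_le_norm_toEuclideanLin_of_mem_sup (h : IsBestRankApprox k A Ahat)
    {v : EuclideanSpace ℝ n}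
    (hv : v ∈ (LinearMap.range (toEuclideanLin Ahatᵀ))ᗮ) (hv1 : ‖v‖ = 1)
    {y : EuclideanSpace ℝ n} (hy : y ∈ LinearMap.range (toEuclideanLin Ahatᵀ) ⊔ ℝ ∙ v) :
    ‖toEuclideanLin (A - Ahat) v‖ * ‖y‖ ≤ ‖toEuclideanLin A y‖ := by
  obtain ⟨u, hu, _, hc, rfl⟩ := Submodule.mem_sup.1 hy
  obtain ⟨c, rfl⟩ := Submodule.mem_span_singleton.1 hc
  set s := ‖toEuclideanLin (A - Ahat) v‖
  have hsu : s * ‖u‖ ≤ ‖toEuclideanLin Ahat u‖ :=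
    (toEuclideanLin Ahat).le_norm_apply_of_forall_norm_eq_one
      (fun w hw hw1 => h.norm_toEuclideanLin_sub_le hw hw1 hv hv1) hu
  have hAy : toEuclideanLin A (u + c • v) =
      toEuclideanLin Ahat u + c • toEuclideanLin (A - Ahat) v := by
    have hu' := h.toEuclideanLin_sub_eq_zero_of_mem hu
    have hv' := h.toEuclideanLin_eq_zero_of_mem_orthogonal hv
    simp only [map_sub, LinearMap.sub_apply, sub_eq_zero] at hu'
    simp only [map_add, map_smul, map_sub, LinearMap.sub_apply, hu', hv', sub_zero]
  have hEv : toEuclideanLin (A - Ahat) v ∈ (LinearMap.range (toEuclideanLin Ahat))ᗮ := by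
    rw [← h.projMatrix_orthogonal_mul_eq]
    simp
  have horth : ⟪toEuclideanLin Ahat u, c • toEuclideanLin (A - Ahat) v⟫ = 0 :=
    Submodule.inner_right_of_mem_orthogonal (LinearMap.mem_range_self _ u)
      (Submodule.smul_mem _ _ hEv)
  have hsq : (s * ‖u + c • v‖) ^ 2 ≤ ‖toEuclideanLin A (u + c • v)‖ ^ 2 := by
    rw [hAy, norm_add_sq_real, horth, mul_pow, norm_add_sq_real u,
      Submodule.inner_right_of_mem_orthogonal hu (Submodule.smul_mem _ _ hv), norm_smul,
      norm_smul, hv1, Real.norm_eq_abs]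
    nlinarith [pow_le_pow_left₀ (by positivity) hsu 2, sq_abs c]
  exact (pow_le_pow_iff_left₀ (by positivity) (norm_nonneg _) two_ne_zero).1 hsq

theorem l2_opNorm_sub_le {B : Matrix m n ℝ} (h : IsBestRankApprox k A Ahat)
    (hB : B.rank ≤ k) : ‖A - Ahat‖ ≤ ‖A - B‖ := by
  rcases h.rank_le.lt_or_eq with hlt | hk
  · rw [h.eq_of_rank_lt hlt, sub_self, norm_zero]
    exact norm_nonneg _
  set K := LinearMap.range (toEuclideanLin Ahatᵀ)
  have hK : finrank ℝ K = k := by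
    rw [← hk, ← rank_transpose, rank_eq_finrank_range_toEuclideanLin]
  have hunit : ∀ v ∈ Kᗮ, ‖v‖ = 1 → ‖toEuclideanLin (A - Ahat) v‖ ≤ ‖A - B‖ := by
    intro v hv hv1
    have hvK : v ∉ K := fun hvK => by
      have := Submodule.inner_right_of_mem_orthogonal hvK hv
      rw [real_inner_self_eq_norm_sq, hv1] at this
      norm_num at this
    refine le_l2_opNorm_sub_of_rank_lt_finrank (V := K ⊔ ℝ ∙ v) ?_
      fun y hy => h.mul_norm_le_norm_toEuclideanLin_of_mem_sup hv hv1 hy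
    rw [Submodule.finrank_sup_span_singleton hvK, hK]
    omega
  refine l2_opNorm_le_of_bound (norm_nonneg _) fun x => ?_
  have hx : toEuclideanLin (A - Ahat) x = toEuclideanLin (A - Ahat) (Kᗮ.starProjection x) := by
    conv_lhs => rw [← K.starProjection_add_starProjection_orthogonal x]
    rw [map_add, h.toEuclideanLin_sub_eq_zero_of_mem (K.starProjection_apply_mem x), zero_add]
  rw [hx]
  exact ((toEuclideanLin (A - Ahat)).norm_apply_le_of_forall_norm_eq_one hunit
    (Kᗮ.starProjection_apply_mem x)).trans
    (mul_le_mul_of_nonneg_left (Kᗮ.norm_starProjection_apply_le x) (norm_nonneg _))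

lemma sub_eq_projMatrix_mul_add {B : Matrix m n ℝ} (h : IsBestRankApprox k A Ahat) :
    Ahat - B = (LinearMap.range (toEuclideanLin Ahat)).projMatrix * (A - B) +
      (LinearMap.range (toEuclideanLin Ahat))ᗮ.projMatrix * (-B) := by
  set U := LinearMap.range (toEuclideanLin Ahat)
  have hQA : Uᗮ.projMatrix * A = A - Ahat := h.projMatrix_orthogonal_mul_eq
  rw [show -B = (A - B) - A by abel, Matrix.mul_sub Uᗮ.projMatrix, hQA, ← add_sub_assoc,
    ← Matrix.add_mul, U.projMatrix_add_projMatrix_orthogonal, Matrix.one_mul]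
  abel

lemma l2_opNorm_projMatrix_orthogonal_mul_neg_le {B : Matrix m n ℝ}
    (h : IsBestRankApprox k A Ahat) (hB : B.rank ≤ k) :
    ‖(LinearMap.range (toEuclideanLin Ahat))ᗮ.projMatrix * (-B)‖ ≤ 2 * ‖A - B‖ := by
  set U := LinearMap.range (toEuclideanLin Ahat)
  have hQA : Uᗮ.projMatrix * A = A - Ahat := h.projMatrix_orthogonal_mul_eq
  rw [show -B = (A - B) - A by abel, Matrix.mul_sub Uᗮ.projMatrix, hQA, two_mul]
  exact (norm_sub_le _ _).trans (add_le_add (Uᗮ.l2_opNorm_projMatrix_mul_le _)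
    (h.l2_opNorm_sub_le hB))

theorem frobeniusInner_sub_le {B : Matrix m n ℝ} (h : IsBestRankApprox k A Ahat)
    (hB : B.rank ≤ k) : frobeniusInner (Ahat - B) (Ahat - B) ≤ 5 * k * ‖A - B‖ ^ 2 := by
  set U := LinearMap.range (toEuclideanLin Ahat)
  have hrankP : (U.projMatrix * (A - B)).rank ≤ k := (rank_mul_le_left _ _).trans <| by
    rw [U.rank_projMatrix, ← rank_eq_finrank_range_toEuclideanLin]
    exact h.rank_le
  have hrankQ : (Uᗮ.projMatrix * (-B)).rank ≤ k := by
    rw [Matrix.mul_neg, ← Matrix.neg_mul]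
    exact (rank_mul_le_right _ _).trans hB
  rw [h.sub_eq_projMatrix_mul_add, U.frobeniusInner_self_projMatrix_mul_add]
  calc _ ≤ k * ‖A - B‖ ^ 2 + k * (2 * ‖A - B‖) ^ 2 :=
        add_le_add (frobeniusInner_self_le_of_rank_le hrankP (U.l2_opNorm_projMatrix_mul_le _))
          (frobeniusInner_self_le_of_rank_le hrankQ
            (h.l2_opNorm_projMatrix_orthogonal_mul_neg_le hB))
    _ = 5 * k * ‖A - B‖ ^ 2 := by ring

end IsBestRankApprox

end Matrix

lemma enorm_eq_norm_toLp {n : ℕ} (v : Fin n → ℝ) : _root_.enorm v = ‖toLp 2 v‖ := by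
  simp [_root_.enorm, EuclideanSpace.norm_eq]

lemma l2_opNorm_le_specNorm {m n : ℕ} (M : Matrix (Fin m) (Fin n) ℝ) : ‖M‖ ≤ specNorm M := by
  have hbdd : BddAbove ((fun x : Fin n → ℝ => _root_.enorm (M.mulVec x)) ''
      {x | _root_.enorm x = 1}) := by
    refine ⟨‖M‖, ?_⟩
    rintro _ ⟨x, hx, rfl⟩
    rw [Set.mem_ofPred_eq, enorm_eq_norm_toLp] at hx
    simpa [enorm_eq_norm_toLp, hx] using M.norm_toEuclideanLin_le (toLp 2 x)
  have hunit : ∀ x ∈ (⊤ : Submodule ℝ (EuclideanSpace ℝ (Fin n))), ‖x‖ = 1 →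
      ‖toEuclideanLin M x‖ ≤ specNorm M := fun x _ hx =>
    le_csSup hbdd ⟨ofLp x, by simpa [enorm_eq_norm_toLp],
      by simp [enorm_eq_norm_toLp, toLpLin_apply]⟩
  refine l2_opNorm_le_of_bound (Real.sSup_nonneg ?_) fun x =>
    (toEuclideanLin M).norm_apply_le_of_forall_norm_eq_one hunit Submodule.mem_top
  rintro _ ⟨x, -, rfl⟩
  exact Real.sqrt_nonneg _

/-- If `rank B = k` and `Â` is a best rank-`k` Frobenius approximation of `A`, then
`‖Â - B‖_F² ≤ 5 k ‖A - B‖₂²`. -/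
theorem best_rank_k_close_to_low_rank (m n k : ℕ)
    (A B Ahat : Matrix (Fin m) (Fin n) ℝ)
    (hB : B.rank = k)
    (hAhat_rank : Ahat.rank ≤ k)
    (hAhat_best : ∀ C : Matrix (Fin m) (Fin n) ℝ, C.rank ≤ k →
      (∑ i, ∑ j, (A i j - Ahat i j) ^ 2) ≤ ∑ i, ∑ j, (A i j - C i j) ^ 2) :
    (∑ i, ∑ j, (Ahat i j - B i j) ^ 2) ≤ 5 * k * specNorm (A - B) ^ 2 := by
  have h : IsBestRankApprox k A Ahat := ⟨hAhat_rank, fun C hC => by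
    simpa only [frobeniusInner_self_sub_eq_sum_sq] using hAhat_best C hC⟩
  rw [← frobeniusInner_self_sub_eq_sum_sq]
  calc _ ≤ 5 * k * ‖A - B‖ ^ 2 := h.frobeniusInner_sub_le hB.le
    _ ≤ 5 * k * specNorm (A - B) ^ 2 := by
        gcongr
        exact l2_opNorm_le_specNorm (A - B)
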